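/- arXiv:2404.14402 — 3 statements merged into one kernel-verified Lean document; each statement's English description precedes it below -/
import Mathlib

section
/- Comparison principle from submodularity: let d, d′ ∈ L^∞(Ω) with d′ ≤ d almost everywhere, and let w, w′ be the respective minimizers of u ↦ (1/2ε)∫_Ω |u−d|² dρ + TV_ε(u) and u ↦ (1/2ε)∫_Ω |u−d′|² dρ + TV_ε(u) over L²(Ω). Then w′ ≤ w almost everywhere in Ω. -/
open MeasureTheory
open scoped ENNReal

/-!
Taking `w ⊔ w'` as competitor for the data `d` and `w ⊓ w'` for `d'` does not increase the sum
of the two energies: the fidelity terms satisfy the pointwise rearrangement inequality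
`(a ⊔ b - p)² + (a ⊓ b - q)² ≤ (a - p)² + (b - q)²` for `q ≤ p`, and `TV_ε` is submodular.
Since `w` and `w'` are minimizers, one of the two competitors has the same energy as the
corresponding minimizer, hence equals it by uniqueness; either `w ⊔ w' = w` or `w ⊓ w' = w'`
gives `w' ≤ w`.
-/

theorem sq_sup_sub_add_sq_inf_sub_le {a b p q : ℝ} (hqp : q ≤ p) :
    (a ⊔ b - p) ^ 2 + (a ⊓ b - q) ^ 2 ≤ (a - p) ^ 2 + (b - q) ^ 2 := by
  rcases le_total b a with h | h
  · rw [sup_eq_left.mpr h, inf_eq_right.mpr h]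
  · rw [sup_eq_right.mpr h, inf_eq_left.mpr h]
    nlinarith [mul_nonneg (sub_nonneg.mpr h) (sub_nonneg.mpr hqp)]

namespace ENNReal

theorem div_add_mul_le_mul {a b c r : ℝ≥0∞} (hab : a + b ≠ ∞) (hc : c ≤ (a + b) * r) :
    a / (a + b) * c ≤ a * r := by
  rcases eq_or_ne (a + b) 0 with h0 | h0
  · simp [(add_eq_zero.mp h0).1]
  · calc a / (a + b) * c ≤ a / (a + b) * ((a + b) * r) := mul_le_mul_right hc _
      _ = a * r := by rw [← mul_assoc, ENNReal.div_mul_cancel h0 hab]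

theorem div_add_mul_add_div_add_mul {a b c r : ℝ≥0∞} (hab : a + b ≠ ∞)
    (hc : c ≤ (a + b) * r) : a / (a + b) * c + b / (a + b) * c = c := by
  rcases eq_or_ne (a + b) 0 with h0 | h0
  · have hc0 : c = 0 := by simpa [h0] using hc
    simp [hc0]
  · rw [← add_mul, ENNReal.div_add_div_same, ENNReal.div_self h0 hab, one_mul]

theorem eq_or_eq_of_add_le_add {a a' b b' : ℝ≥0∞} (ha : a ≤ a') (hb : b ≤ b')
    (h : a' + b' ≤ a + b) : a' = a ∨ b' = b := by
  rcases eq_or_ne a ∞ with ha_top | ha_top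
  · exact Or.inl (ha_top ▸ top_le_iff.mp (ha_top ▸ ha))
  · refine Or.inr (le_antisymm ?_ hb)
    exact (ENNReal.add_le_add_iff_left ha_top).mp ((add_le_add_left ha b').trans h)

end ENNReal

/-- The weight `R` need not be measurable: `(p + q) * R` is split proportionally to `p` and `q`
below a measurable minorant with the same lower integral. -/
theorem lintegral_add_mul_le {α : Type*} [MeasurableSpace α] {μ : Measure α}
    {p q : α → ℝ≥0∞} (R : α → ℝ≥0∞) (hp : AEMeasurable p μ) (hq : AEMeasurable q μ)
    (hpq : ∀ᵐ x ∂μ, p x + q x ≠ ∞) :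
    ∫⁻ x, (p x + q x) * R x ∂μ ≤ ∫⁻ x, p x * R x ∂μ + ∫⁻ x, q x * R x ∂μ := by
  obtain ⟨g, hg, hgle, hgeq⟩ := exists_measurable_le_lintegral_eq μ fun x => (p x + q x) * R x
  have hsplit : ∀ᵐ x ∂μ, p x / (p x + q x) * g x + q x / (p x + q x) * g x = g x := by
    filter_upwards [hpq] with x hx using ENNReal.div_add_mul_add_div_add_mul hx (hgle x)
  calc ∫⁻ x, (p x + q x) * R x ∂μ
      = ∫⁻ x, p x / (p x + q x) * g x + q x / (p x + q x) * g x ∂μ :=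
        hgeq.trans (lintegral_congr_ae hsplit).symm
    _ = ∫⁻ x, p x / (p x + q x) * g x ∂μ + ∫⁻ x, q x / (p x + q x) * g x ∂μ :=
        lintegral_add_left' ((hp.div (hp.add hq)).mul hg.aemeasurable) _
    _ ≤ ∫⁻ x, p x * R x ∂μ + ∫⁻ x, q x * R x ∂μ := by
        refine add_le_add (lintegral_mono_ae ?_) (lintegral_mono_ae ?_) <;>
          filter_upwards [hpq] with x hx
        · exact ENNReal.div_add_mul_le_mul hx (hgle x)
        · have hgx : g x ≤ (q x + p x) * R x := by simpa only [add_comm] using hgle x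
          rw [add_comm] at hx ⊢
          exact ENNReal.div_add_mul_le_mul hx hgx

theorem lintegral_sq_sup_add_lintegral_sq_inf_le {α : Type*} [MeasurableSpace α]
    {μ : Measure α} (ρ : α → ℝ) {u v f g : α → ℝ} (hu : AEMeasurable u μ)
    (hv : AEMeasurable v μ) (hf : AEMeasurable f μ) (hg : AEMeasurable g μ)
    (hgf : ∀ᵐ x ∂μ, g x ≤ f x) :
    ∫⁻ x, ENNReal.ofReal ((u x ⊔ v x - f x) ^ 2 * ρ x) ∂μ
        + ∫⁻ x, ENNReal.ofReal ((u x ⊓ v x - g x) ^ 2 * ρ x) ∂μ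
      ≤ ∫⁻ x, ENNReal.ofReal ((u x - f x) ^ 2 * ρ x) ∂μ
        + ∫⁻ x, ENNReal.ofReal ((v x - g x) ^ 2 * ρ x) ∂μ := by
  simp only [ENNReal.ofReal_mul (sq_nonneg _)]
  calc _ ≤ ∫⁻ x, ENNReal.ofReal ((u x ⊔ v x - f x) ^ 2) * ENNReal.ofReal (ρ x)
          + ENNReal.ofReal ((u x ⊓ v x - g x) ^ 2) * ENNReal.ofReal (ρ x) ∂μ :=
        le_lintegral_add _ _
    _ ≤ ∫⁻ x, (ENNReal.ofReal ((u x - f x) ^ 2) + ENNReal.ofReal ((v x - g x) ^ 2))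
          * ENNReal.ofReal (ρ x) ∂μ := by
        refine lintegral_mono_ae ?_
        filter_upwards [hgf] with x hx
        rw [← add_mul, ← ENNReal.ofReal_add (sq_nonneg _) (sq_nonneg _),
          ← ENNReal.ofReal_add (sq_nonneg _) (sq_nonneg _)]
        exact mul_le_mul_left (ENNReal.ofReal_le_ofReal (sq_sup_sub_add_sq_inf_sub_le hx)) _
    _ ≤ _ := lintegral_add_mul_le _ ((hu.sub hf).pow_const 2).ennreal_ofReal
        ((hv.sub hg).pow_const 2).ennreal_ofReal
        (ae_of_all _ fun _ => ENNReal.add_ne_top.mpr ⟨ENNReal.ofReal_ne_top, ENNReal.ofReal_ne_top⟩)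

theorem comparison_principle_general
    (N : ℕ) (Ω : Set (EuclideanSpace ℝ (Fin N)))
    (ρ : EuclideanSpace ℝ (Fin N) → ℝ)
    (ε : ℝ)
    (J : (EuclideanSpace ℝ (Fin N) → ℝ) → ℝ≥0∞)
    (hJsub : ∀ u v : EuclideanSpace ℝ (Fin N) → ℝ,
      J (fun x => u x ⊔ v x) + J (fun x => u x ⊓ v x) ≤ J u + J v)
    (d d' : EuclideanSpace ℝ (Fin N) → ℝ)
    (hd : MemLp d ⊤ (volume.restrict Ω)) (hd' : MemLp d' ⊤ (volume.restrict Ω))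
    (hdd' : ∀ᵐ x ∂(volume.restrict Ω), d' x ≤ d x)
    (E : (EuclideanSpace ℝ (Fin N) → ℝ) → (EuclideanSpace ℝ (Fin N) → ℝ) → ℝ≥0∞)
    (hE : ∀ g u, E g u = (ENNReal.ofReal (2 * ε))⁻¹
        * (∫⁻ x in Ω, ENNReal.ofReal ((u x - g x) ^ 2 * ρ x)) + J u)
    (w w' : EuclideanSpace ℝ (Fin N) → ℝ)
    (hw : MemLp w 2 (volume.restrict Ω)) (hw' : MemLp w' 2 (volume.restrict Ω))
    (hwmin : ∀ v, MemLp v 2 (volume.restrict Ω) → E d w ≤ E d v)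
    (hwuniq : ∀ v, MemLp v 2 (volume.restrict Ω) → E d v = E d w →
      v =ᵐ[volume.restrict Ω] w)
    (hw'min : ∀ v, MemLp v 2 (volume.restrict Ω) → E d' w' ≤ E d' v)
    (hw'uniq : ∀ v, MemLp v 2 (volume.restrict Ω) → E d' v = E d' w' →
      v =ᵐ[volume.restrict Ω] w') :
    ∀ᵐ x ∂(volume.restrict Ω), w' x ≤ w x := by
  have hsup : MemLp (fun x => w x ⊔ w' x) 2 (volume.restrict Ω) := hw.sup hw'
  have hinf : MemLp (fun x => w x ⊓ w' x) 2 (volume.restrict Ω) := hw.inf hw'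
  have hfidelity := lintegral_sq_sup_add_lintegral_sq_inf_le ρ hw.aemeasurable hw'.aemeasurable
    hd.aemeasurable hd'.aemeasurable hdd'
  have hswap : E d (fun x => w x ⊔ w' x) + E d' (fun x => w x ⊓ w' x) ≤ E d w + E d' w' := by
    simp only [hE]
    rw [add_add_add_comm, ← mul_add, add_add_add_comm, ← mul_add]
    exact add_le_add (mul_le_mul_right hfidelity _) (hJsub w w')
  rcases ENNReal.eq_or_eq_of_add_le_add (hwmin _ hsup) (hw'min _ hinf) hswap with h | h
  · filter_upwards [hwuniq _ hsup h] with x hx using sup_eq_left.mp hx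
  · filter_upwards [hw'uniq _ hinf h] with x hx using inf_eq_right.mp hx

/-- Comparison principle from submodularity: if `d′ ≤ d` a.e. and `w, w′` are
the (unique) minimizers of `u ↦ (1/2ε)∫_Ω |u−d|² dρ + TV_ε(u)` and the
corresponding energy with data `d′`, for a proper convex submodular
functional `TV_ε`, then `w′ ≤ w` a.e. in `Ω`. -/
theorem comparison_principle
    (N : ℕ) (Ω : Set (EuclideanSpace ℝ (Fin N)))
    (hΩopen : IsOpen Ω) (hΩbdd : Bornology.IsBounded Ω) (hΩconn : IsConnected Ω)
    (ρ : EuclideanSpace ℝ (Fin N) → ℝ)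
    (cρ : ℝ) (hcρ : 0 < cρ) (hρlb : ∀ x ∈ Ω, cρ ≤ ρ x)
    (ε : ℝ) (hε : 0 < ε)
    (J : (EuclideanSpace ℝ (Fin N) → ℝ) → ℝ≥0∞)
    (hJproper : ∃ u, J u ≠ ⊤)
    (hJconvex : ∀ u v : EuclideanSpace ℝ (Fin N) → ℝ, ∀ t : ℝ, 0 ≤ t → t ≤ 1 →
      J (fun x => t * u x + (1 - t) * v x)
        ≤ ENNReal.ofReal t * J u + ENNReal.ofReal (1 - t) * J v)
    (hJsub : ∀ u v : EuclideanSpace ℝ (Fin N) → ℝ,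
      J (fun x => u x ⊔ v x) + J (fun x => u x ⊓ v x) ≤ J u + J v)
    (d d' : EuclideanSpace ℝ (Fin N) → ℝ)
    (hd : MemLp d ⊤ (volume.restrict Ω)) (hd' : MemLp d' ⊤ (volume.restrict Ω))
    (hdd' : ∀ᵐ x ∂(volume.restrict Ω), d' x ≤ d x)
    (E : (EuclideanSpace ℝ (Fin N) → ℝ) → (EuclideanSpace ℝ (Fin N) → ℝ) → ℝ≥0∞)
    (hE : ∀ g u, E g u = (ENNReal.ofReal (2 * ε))⁻¹
        * (∫⁻ x in Ω, ENNReal.ofReal ((u x - g x) ^ 2 * ρ x)) + J u)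
    (w w' : EuclideanSpace ℝ (Fin N) → ℝ)
    (hw : MemLp w 2 (volume.restrict Ω)) (hw' : MemLp w' 2 (volume.restrict Ω))
    (hwmin : ∀ v, MemLp v 2 (volume.restrict Ω) → E d w ≤ E d v)
    (hwuniq : ∀ v, MemLp v 2 (volume.restrict Ω) → E d v = E d w →
      v =ᵐ[volume.restrict Ω] w)
    (hw'min : ∀ v, MemLp v 2 (volume.restrict Ω) → E d' w' ≤ E d' v)
    (hw'uniq : ∀ v, MemLp v 2 (volume.restrict Ω) → E d' v = E d' w' →
      v =ᵐ[volume.restrict Ω] w') :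
    ∀ᵐ x ∂(volume.restrict Ω), w' x ≤ w x :=
  comparison_principle_general N Ω ρ ε J hJsub d d' hd hd' hdd' E hE w w' hw hw' hwmin hwuniq hw'min
    hw'uniq
end

section
/- Unique maximizer on small balls: let Ω ⊂ ℝ^N be a bounded domain and u ∈ C²(closure Ω) with |∇u| ≥ c > 0 on closure Ω. Let Λ_max be the supremum of the largest eigenvalue of the Hessian ∇²u over Ω. If 0 < ε < c/Λ_max is sufficiently small, then for every x ∈ Ω with dist(x, ∂Ω) > ε, the maximum of u over the closed ball of radius ε around x is attained at a unique point y*, and this point satisfies |y* − x| = ε and ∇u(y*) = λ*(y* − x) with λ* = |∇u(y*)|/ε. -/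
/-!
At a maximizer `y` of `u` on `closedBall x ε` the first-order condition
`⟪∇u y, v - y⟫ ≤ 0` holds for every `v` in the ball. As `∇u y ≠ 0`, testing it at the pole
`x + (ε / ‖∇u y‖) • ∇u y` and using Cauchy–Schwarz forces `y` to be that pole: `y` lies on the
sphere and `∇u y` is the outward normal of length `‖∇u y‖`.
For a second point `z` of the sphere, `⟪y - x, z - y⟫ = -‖z - y‖² / 2`, so the second-order
Taylor bound gives `u z ≤ u y - (‖∇u y‖ / ε - Λ) ‖z - y‖² / 2`, which is `< u y` when `z ≠ y`
because `Λ ε < c ≤ ‖∇u y‖`.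
-/

open Metric Set InnerProductSpace
open scoped RealInnerProductSpace

theorem image_le_add_deriv_mul_add_of_deriv2_le {f f' f'' : ℝ → ℝ} {a b M : ℝ}
    (hf : ∀ t ∈ Icc a b, HasDerivAt f (f' t) t) (hf' : ∀ t ∈ Icc a b, HasDerivAt f' (f'' t) t)
    (hM : ∀ t ∈ Ico a b, f'' t ≤ M) :
    ∀ t ∈ Icc a b, f t ≤ f a + f' a * (t - a) + M / 2 * (t - a) ^ 2 := by
  have hline : ∀ t, HasDerivAt (fun s => f' a + M * (s - a)) M t := fun t => by
    simpa using (((hasDerivAt_id t).sub_const a).const_mul M).const_add (f' a)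
  have hparabola : ∀ t, HasDerivAt (fun s => f a + f' a * (s - a) + M / 2 * (s - a) ^ 2)
      (f' a + M * (t - a)) t := fun t => by
    have := ((((hasDerivAt_id t).sub_const a).const_mul (f' a)).const_add (f a)).add
      ((((hasDerivAt_id t).sub_const a).pow 2).const_mul (M / 2))
    exact this.congr_deriv (by simp only [id, Nat.cast_ofNat]; ring)
  have hf'_le : ∀ t ∈ Icc a b, f' t ≤ f' a + M * (t - a) :=
    image_le_of_deriv_right_le_deriv_boundary
      (fun t ht => (hf' t ht).continuousAt.continuousWithinAt)
      (fun t ht => (hf' t (Ico_subset_Icc_self ht)).hasDerivWithinAt) (by simp)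
      (fun t _ => (hline t).continuousAt.continuousWithinAt)
      (fun t _ => (hline t).hasDerivWithinAt) hM
  exact image_le_of_deriv_right_le_deriv_boundary
    (fun t ht => (hf t ht).continuousAt.continuousWithinAt)
    (fun t ht => (hf t (Ico_subset_Icc_self ht)).hasDerivWithinAt) (by simp)
    (fun t _ => (hparabola t).continuousAt.continuousWithinAt)
    (fun t _ => (hparabola t).hasDerivWithinAt) (fun t ht => hf'_le t (Ico_subset_Icc_self ht))

section InnerProductSpace

variable {F : Type*} [NormedAddCommGroup F] [InnerProductSpace ℝ F]

theorem norm_sub_eq_and_eq_smul_of_forall_inner_sub_nonpos {g x y : F} {ε : ℝ} (hε : 0 < ε)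
    (hg : g ≠ 0) (hy : y ∈ closedBall x ε) (h : ∀ v ∈ closedBall x ε, ⟪g, v - y⟫_ℝ ≤ 0) :
    ‖y - x‖ = ε ∧ g = (‖g‖ / ε) • (y - x) := by
  have hg' : 0 < ‖g‖ := norm_pos_iff.2 hg
  have hyx : ‖y - x‖ ≤ ε := by rwa [← dist_eq_norm, ← mem_closedBall]
  have hpole : x + (ε / ‖g‖) • g ∈ closedBall x ε := by
    rw [mem_closedBall, dist_eq_norm, add_sub_cancel_left, norm_smul,
      Real.norm_of_nonneg (by positivity), div_mul_cancel₀ _ hg'.ne']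
  have hlower : ε * ‖g‖ ≤ ⟪g, y - x⟫_ℝ := by
    have := h _ hpole
    rw [show x + (ε / ‖g‖) • g - y = (ε / ‖g‖) • g - (y - x) by abel, inner_sub_right,
      real_inner_smul_right, real_inner_self_eq_norm_sq] at this
    field_simp at this
    linarith
  have hupper : ⟪g, y - x⟫_ℝ ≤ ‖g‖ * ‖y - x‖ := real_inner_le_norm _ _
  have hnorm : ‖y - x‖ = ε := le_antisymm hyx (le_of_mul_le_mul_left (by nlinarith) hg')
  have hcs : ⟪g, y - x⟫_ℝ = ‖g‖ * ‖y - x‖ := by rw [hnorm] at hupper ⊢; linarith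
  refine ⟨hnorm, ?_⟩
  rw [inner_eq_norm_mul_iff_real, hnorm] at hcs
  rw [div_eq_inv_mul, mul_smul, ← hcs, smul_smul, inv_mul_cancel₀ hε.ne', one_smul]

theorem inner_sub_sub_eq_neg_half_norm_sq {x y z : F} (h : ‖y - x‖ = ‖z - x‖) :
    ⟪y - x, z - y⟫_ℝ = -(‖z - y‖ ^ 2 / 2) := by
  have hzy : z - y = (z - x) - (y - x) := by abel
  rw [hzy, inner_sub_right, real_inner_self_eq_norm_sq, @norm_sub_sq_real _ _ _ (z - x),
    real_inner_comm, h]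
  ring

variable [CompleteSpace F]

theorem ContDiffAt.gradient {u : F → ℝ} {w : F} {m n : WithTop ℕ∞} (h : ContDiffAt ℝ n u w)
    (hmn : m + 1 ≤ n) : ContDiffAt ℝ m (gradient u) w :=
  (toDual ℝ F).symm.contDiff.contDiffAt.comp w (h.fderiv_right hmn)

theorem IsMaxOn.inner_gradient_sub_nonpos {u : F → ℝ} {s : Set F} {y v : F} (hs : Convex ℝ s)
    (hmax : IsMaxOn u s y) (hu : DifferentiableAt ℝ u y) (hy : y ∈ s) (hv : v ∈ s) :
    ⟪gradient u y, v - y⟫_ℝ ≤ 0 := by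
  rw [inner_gradient_left]
  refine hmax.localize.hasFDerivWithinAt_nonpos hu.hasFDerivAt.hasFDerivWithinAt
    (mem_posTangentConeAt_of_segment_subset ?_)
  rw [add_sub_cancel]
  exact hs.segment_subset hy hv

theorem IsMaxOn.norm_sub_eq_and_gradient_eq_smul {u : F → ℝ} {x y : F} {ε : ℝ} (hε : 0 < ε)
    (hmax : IsMaxOn u (closedBall x ε) y) (hy : y ∈ closedBall x ε)
    (hu : DifferentiableAt ℝ u y) (hg : gradient u y ≠ 0) :
    ‖y - x‖ = ε ∧ gradient u y = (‖gradient u y‖ / ε) • (y - x) :=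
  norm_sub_eq_and_eq_smul_of_forall_inner_sub_nonpos hε hg hy fun _ hv =>
    hmax.inner_gradient_sub_nonpos (convex_closedBall x ε) hu hy hv

theorem Convex.le_add_inner_gradient_add_of_hessian_le {u : F → ℝ} {s : Set F} {Λ : ℝ} {y z : F}
    (hs : Convex ℝ s) (hu : ∀ w ∈ s, ContDiffAt ℝ 2 u w)
    (hΛ : ∀ w ∈ s, ∀ v, ⟪fderiv ℝ (gradient u) w v, v⟫_ℝ ≤ Λ * ‖v‖ ^ 2)
    (hy : y ∈ s) (hz : z ∈ s) :
    u z ≤ u y + ⟪gradient u y, z - y⟫_ℝ + Λ / 2 * ‖z - y‖ ^ 2 := by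
  set γ : ℝ → F := fun t => y + t • (z - y)
  have hγs : ∀ t ∈ Icc (0 : ℝ) 1, γ t ∈ s := fun t ht => hs.add_smul_sub_mem hy hz ht
  have hγ : ∀ t, HasDerivAt γ (z - y) t := fun t =>
    (((hasDerivAt_id t).smul_const (z - y)).const_add y).congr_deriv (one_smul ℝ _)
  have hf : ∀ t ∈ Icc (0 : ℝ) 1, HasDerivAt (u ∘ γ) ⟪gradient u (γ t), z - y⟫_ℝ t :=
    fun t ht => by
      rw [inner_gradient_left]
      exact ((hu _ (hγs t ht)).differentiableAt two_ne_zero).hasFDerivAt.comp_hasDerivAt t (hγ t)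
  have hf' : ∀ t ∈ Icc (0 : ℝ) 1, HasDerivAt (fun t => ⟪gradient u (γ t), z - y⟫_ℝ)
      ⟪fderiv ℝ (gradient u) (γ t) (z - y), z - y⟫_ℝ t := fun t ht => by
    have hgrad := (((hu _ (hγs t ht)).gradient le_rfl).differentiableAt one_ne_zero).hasFDerivAt
    simpa using (hgrad.comp_hasDerivAt t (hγ t)).inner ℝ (hasDerivAt_const t (z - y))
  have := image_le_add_deriv_mul_add_of_deriv2_le hf hf'
    (fun t ht => hΛ _ (hγs t (Ico_subset_Icc_self ht)) _) 1 (right_mem_Icc.2 zero_le_one)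
  simpa [γ, div_mul_eq_mul_div] using this

theorem image_lt_of_mem_sphere_of_gradient_eq_smul {u : F → ℝ} {x y z : F} {ε Λ : ℝ}
    (hε : 0 < ε) (hu : ∀ w ∈ closedBall x ε, ContDiffAt ℝ 2 u w)
    (hΛ : ∀ w ∈ closedBall x ε, ∀ v, ⟪fderiv ℝ (gradient u) w v, v⟫_ℝ ≤ Λ * ‖v‖ ^ 2)
    (hy : y ∈ sphere x ε) (hz : z ∈ sphere x ε) (hzy : z ≠ y)
    (hgrad : gradient u y = (‖gradient u y‖ / ε) • (y - x)) (hΛε : Λ * ε < ‖gradient u y‖) :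
    u z < u y := by
  have htaylor := (convex_closedBall x ε).le_add_inner_gradient_add_of_hessian_le hu hΛ
    (sphere_subset_closedBall hy) (sphere_subset_closedBall hz)
  rw [mem_sphere_iff_norm] at hy hz
  rw [hgrad, real_inner_smul_left, inner_sub_sub_eq_neg_half_norm_sq (hy.trans hz.symm)]
    at htaylor
  have hΛ' : Λ < ‖gradient u y‖ / ε := (lt_div_iff₀ hε).2 hΛε
  have hzy' : 0 < ‖z - y‖ ^ 2 := by positivity [sub_ne_zero.2 hzy]
  nlinarith

end InnerProductSpace

theorem unique_maximizer_small_ball_general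
    (N : ℕ) (Ω : Set (EuclideanSpace ℝ (Fin N)))
    (hΩopen : IsOpen Ω)
    (u : EuclideanSpace ℝ (Fin N) → ℝ)
    (hu : ContDiffOn ℝ 2 u (closure Ω))
    (c : ℝ) (hc : 0 < c)
    (hgrad : ∀ x ∈ closure Ω, c ≤ ‖gradient u x‖)
    (Λ : ℝ) (hΛpos : 0 < Λ)
    (hΛ : ∀ x ∈ Ω, ∀ v : EuclideanSpace ℝ (Fin N),
      (inner ℝ (fderiv ℝ (gradient u) x v) v : ℝ) ≤ Λ * ‖v‖ ^ 2) :
    ∃ ε₀ : ℝ, 0 < ε₀ ∧ ε₀ ≤ c / Λ ∧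
      ∀ ε : ℝ, 0 < ε → ε < ε₀ →
        ∀ x ∈ Ω, ε < infDist x Ωᶜ →
          ∃ y : EuclideanSpace ℝ (Fin N),
            (y ∈ closedBall x ε ∧ IsMaxOn u (closedBall x ε) y)
            ∧ (∀ y' ∈ closedBall x ε, IsMaxOn u (closedBall x ε) y' → y' = y)
            ∧ ‖y - x‖ = ε
            ∧ gradient u y = (‖gradient u y‖ / ε) • (y - x) := by
  refine ⟨c / Λ, div_pos hc hΛpos, le_rfl, fun ε hε hεc x _ hxε => ?_⟩
  have hball : closedBall x ε ⊆ Ω := (closedBall_subset_ball hxε).trans ball_infDist_compl_subset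
  have hC2 : ∀ w ∈ closedBall x ε, ContDiffAt ℝ 2 u w := fun w hw =>
    hu.contDiffAt (Filter.mem_of_superset (hΩopen.mem_nhds (hball hw)) subset_closure)
  have hc_le : ∀ w ∈ closedBall x ε, c ≤ ‖gradient u w‖ := fun w hw =>
    hgrad w (subset_closure (hball hw))
  have hnormal : ∀ y ∈ closedBall x ε, IsMaxOn u (closedBall x ε) y →
      ‖y - x‖ = ε ∧ gradient u y = (‖gradient u y‖ / ε) • (y - x) := fun y hy hmax =>
    hmax.norm_sub_eq_and_gradient_eq_smul hε hy ((hC2 y hy).differentiableAt two_ne_zero)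
      (norm_pos_iff.1 (hc.trans_le (hc_le y hy)))
  obtain ⟨y, hy, hymax⟩ := (isCompact_closedBall x ε).exists_isMaxOn
    (nonempty_closedBall.2 hε.le) (hu.continuousOn.mono (hball.trans subset_closure))
  obtain ⟨hyx, hgy⟩ := hnormal y hy hymax
  refine ⟨y, ⟨hy, hymax⟩, fun z hz hzmax => ?_, hyx, hgy⟩
  by_contra hzy
  have hΛε : Λ * ε < ‖gradient u y‖ := by
    have := (lt_div_iff₀ hΛpos).1 hεc
    linarith [hc_le y hy]
  exact (hzmax hy).not_gt <| image_lt_of_mem_sphere_of_gradient_eq_smul hε hC2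
    (fun w hw => hΛ w (hball hw)) (mem_sphere_iff_norm.2 hyx)
    (mem_sphere_iff_norm.2 (hnormal z hz hzmax).1) hzy hgy hΛε

/-- Unique maximizer on small balls: if `u ∈ C²(closure Ω)` with
`|∇u| ≥ c > 0` and `Λ` bounds the largest eigenvalue of the Hessian, then
for all sufficiently small `ε ∈ (0, c/Λ)` and every `x ∈ Ω` with
`dist(x, ∂Ω) > ε`, the maximum of `u` over the closed ball `B̄(x,ε)` is
attained at a unique point `y*`, which satisfies `|y* − x| = ε` and
`∇u(y*) = (|∇u(y*)|/ε)(y* − x)`. -/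
theorem unique_maximizer_small_ball
    (N : ℕ) (Ω : Set (EuclideanSpace ℝ (Fin N)))
    (hΩopen : IsOpen Ω) (hΩbdd : Bornology.IsBounded Ω) (hΩconn : IsConnected Ω)
    (u : EuclideanSpace ℝ (Fin N) → ℝ)
    (hu : ContDiffOn ℝ 2 u (closure Ω))
    (c : ℝ) (hc : 0 < c)
    (hgrad : ∀ x ∈ closure Ω, c ≤ ‖gradient u x‖)
    (Λ : ℝ) (hΛpos : 0 < Λ)
    (hΛ : ∀ x ∈ Ω, ∀ v : EuclideanSpace ℝ (Fin N),
      (inner ℝ (fderiv ℝ (gradient u) x v) v : ℝ) ≤ Λ * ‖v‖ ^ 2) :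
    ∃ ε₀ : ℝ, 0 < ε₀ ∧ ε₀ ≤ c / Λ ∧
      ∀ ε : ℝ, 0 < ε → ε < ε₀ →
        ∀ x ∈ Ω, ε < infDist x Ωᶜ →
          ∃ y : EuclideanSpace ℝ (Fin N),
            (y ∈ closedBall x ε ∧ IsMaxOn u (closedBall x ε) y)
            ∧ (∀ y' ∈ closedBall x ε, IsMaxOn u (closedBall x ε) y' → y' = y)
            ∧ ‖y - x‖ = ε
            ∧ gradient u y = (‖gradient u y‖ / ε) • (y - x) :=
  unique_maximizer_small_ball_general N Ω hΩopen u hu c hc hgrad Λ hΛpos hΛ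
end

section
/- Inverse of the argmax map: under the assumptions that u ∈ C²(closure Ω) with |∇u| ≥ c > 0 and ε < c/Λ_max small, the map Γ_ε sending x ∈ Ω_ε to the unique maximizer of u on the closed ball B̄(x,ε)∩Ω is injective with inverse Γ_ε^{-1}(y) = y − ε·∇u(y)/|∇u(y)|, which is a C¹ function on Γ_ε(Ω_ε). -/
open MeasureTheory Metric

/-- Inverse of the argmax map: if `u ∈ C²(closure Ω)` with `|∇u| ≥ c > 0`
and `ε < c/Λ_max` is small, any map `Γ` sending `x ∈ Ω_ε` to a maximizer of
`u` on `B̄(x,ε) ∩ Ω` is injective on `Ω_ε`, with inverse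
`y ↦ y − ε ∇u(y)/|∇u(y)|`, a `C¹` function on `Γ(Ω_ε)`. -/
theorem argmax_map_inverse
    (N : ℕ) (Ω : Set (EuclideanSpace ℝ (Fin N)))
    (hΩopen : IsOpen Ω) (hΩbdd : Bornology.IsBounded Ω) (hΩconn : IsConnected Ω)
    (u : EuclideanSpace ℝ (Fin N) → ℝ)
    (hu : ContDiffOn ℝ 2 u (closure Ω))
    (c : ℝ) (hc : 0 < c)
    (hgrad : ∀ x ∈ closure Ω, c ≤ ‖gradient u x‖)
    (Λ : ℝ) (hΛpos : 0 < Λ)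
    (hΛ : ∀ x ∈ Ω, ∀ v : EuclideanSpace ℝ (Fin N),
      (inner ℝ (fderiv ℝ (gradient u) x v) v : ℝ) ≤ Λ * ‖v‖ ^ 2) :
    ∃ ε₀ : ℝ, 0 < ε₀ ∧ ε₀ ≤ c / Λ ∧
      ∀ ε : ℝ, 0 < ε → ε < ε₀ →
        ∀ Γ : EuclideanSpace ℝ (Fin N) → EuclideanSpace ℝ (Fin N),
          (∀ x ∈ {x ∈ Ω | ε < infDist x Ωᶜ},
            Γ x ∈ closedBall x ε ∩ Ω
              ∧ IsMaxOn u (closedBall x ε ∩ Ω) (Γ x)) →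
          Set.InjOn Γ {x ∈ Ω | ε < infDist x Ωᶜ}
          ∧ (∀ x ∈ {x ∈ Ω | ε < infDist x Ωᶜ},
              Γ x - (ε / ‖gradient u (Γ x)‖) • gradient u (Γ x) = x)
          ∧ ContDiffOn ℝ 1
              (fun y => y - (ε / ‖gradient u y‖) • gradient u y)
              (Γ '' {x ∈ Ω | ε < infDist x Ωᶜ}) := by
  classical
  refine ⟨c / Λ, div_pos hc hΛpos, le_refl _, ?_⟩
  intro ε hε hεlt Γ hΓ
  set S := {x ∈ Ω | ε < infDist x Ωᶜ} with hS
  have key : ∀ x ∈ S, Γ x - (ε / ‖gradient u (Γ x)‖) • gradient u (Γ x) = x := by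
    intro x hx
    obtain ⟨⟨hball, hΩmem⟩, hmax⟩ := hΓ x hx
    have hsub : closedBall x ε ⊆ Ω := by
      intro z hz
      by_contra hzc
      have h1 : infDist x Ωᶜ ≤ dist x z := infDist_le_dist_of_mem hzc
      rw [dist_comm] at h1
      have h2 : dist z x ≤ ε := mem_closedBall.mp hz
      have h3 : ε < infDist x Ωᶜ := hx.2
      linarith
    set y := Γ x with hy
    set g := gradient u y with hg
    have hgc : c ≤ ‖g‖ := hgrad y (subset_closure hΩmem)
    have hgpos : (0 : ℝ) < ‖g‖ := lt_of_lt_of_le hc hgc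
    have hgne : g ≠ 0 := by intro h; rw [h, norm_zero] at hgpos; exact lt_irrefl _ hgpos
    have hnhds : closure Ω ∈ nhds y :=
      Filter.mem_of_superset (hΩopen.mem_nhds hΩmem) subset_closure
    have hdiff : DifferentiableAt ℝ u y :=
      (hu.contDiffAt hnhds).differentiableAt (by norm_num)
    have hfd : HasFDerivAt u (InnerProductSpace.toDual ℝ _ g) y :=
      hdiff.hasGradientAt.hasFDerivAt
    have hmax' : IsMaxOn u (closedBall x ε) y := by
      rwa [Set.inter_eq_self_of_subset_left hsub] at hmax
    have hlocal : IsLocalMaxOn u (closedBall x ε) y :=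
      hmax'.filter_mono inf_le_right
    have hdir : ∀ w ∈ closedBall x ε, (inner ℝ g (w - y) : ℝ) ≤ 0 := by
      intro w hw
      have hseg : segment ℝ y w ⊆ closedBall x ε :=
        (convex_closedBall x ε).segment_subset hball hw
      have hcone := sub_mem_posTangentConeAt_of_segment_subset hseg
      have := hlocal.hasFDerivWithinAt_nonpos hfd.hasFDerivWithinAt hcone
      simpa using this
    have hw : x + (ε / ‖g‖) • g ∈ closedBall x ε := by
      rw [mem_closedBall, dist_eq_norm]
      have : x + (ε / ‖g‖) • g - x = (ε / ‖g‖) • g := by abel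
      rw [this, norm_smul, norm_div, Real.norm_eq_abs, abs_of_pos hε,
        Real.norm_eq_abs, abs_of_pos hgpos, div_mul_cancel₀]
      exact ne_of_gt hgpos
    have hineq := hdir _ hw
    have hinner_split : (inner ℝ g (x + (ε / ‖g‖) • g - y) : ℝ)
        = inner ℝ g (x - y) + (ε / ‖g‖) * ‖g‖ ^ 2 := by
      have : x + (ε / ‖g‖) • g - y = (x - y) + (ε / ‖g‖) • g := by abel
      rw [this, inner_add_right, real_inner_smul_right, real_inner_self_eq_norm_sq]
    rw [hinner_split] at hineq
    have hεg : ε * ‖g‖ ≤ (inner ℝ g (y - x) : ℝ) := by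
      have h2 : (ε / ‖g‖) * ‖g‖ ^ 2 = ε * ‖g‖ := by
        field_simp
      have h3 : (inner ℝ g (y - x) : ℝ) = - inner ℝ g (x - y) := by
        rw [← inner_neg_right]; congr 1; abel
      rw [h3]; linarith [hineq, h2 ▸ hineq]
    have hyx : ‖y - x‖ ≤ ε := by
      rw [← dist_eq_norm]; exact mem_closedBall.mp hball
    have hCS : (inner ℝ g (y - x) : ℝ) ≤ ‖g‖ * ‖y - x‖ := real_inner_le_norm g (y - x)
    have hnorm_eq : ‖y - x‖ = ε := by
      have h1 : ε * ‖g‖ ≤ ‖g‖ * ‖y - x‖ := le_trans hεg hCS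
      nlinarith
    have heq : (inner ℝ g (y - x) : ℝ) = ‖g‖ * ‖y - x‖ := by
      have : ‖g‖ * ‖y - x‖ = ε * ‖g‖ := by rw [hnorm_eq]; ring
      linarith [hεg, hCS]
    have hcol : ‖y - x‖ • g = ‖g‖ • (y - x) := inner_eq_norm_mul_iff_real.mp heq
    rw [hnorm_eq] at hcol
    have : (ε / ‖g‖) • g = y - x := by
      rw [div_eq_mul_inv, mul_comm, mul_smul, hcol, inv_smul_smul₀ (ne_of_gt hgpos)]
    rw [this]; abel
  have himg : Γ '' S ⊆ Ω := by
    rintro _ ⟨x, hx, rfl⟩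
    exact ((hΓ x hx).1).2
  refine ⟨?_, key, ?_⟩
  · intro a ha b hb hab
    have := key a ha
    rw [hab, key b hb] at this
    exact this.symm
  · intro z hz
    have hzΩ : z ∈ Ω := himg hz
    have hnhds : closure Ω ∈ nhds z :=
      Filter.mem_of_superset (hΩopen.mem_nhds hzΩ) subset_closure
    have h2 : ContDiffAt ℝ 2 u z := hu.contDiffAt hnhds
    have hfderiv : ContDiffAt ℝ 1 (fderiv ℝ u) z := h2.fderiv_right (by norm_num)
    have hgradC : ContDiffAt ℝ 1 (gradient u) z := by
      have hlin : ContDiff ℝ 1 (InnerProductSpace.toDual ℝ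
          (EuclideanSpace ℝ (Fin N))).symm :=
        (InnerProductSpace.toDual ℝ (EuclideanSpace ℝ (Fin N))).symm.contDiff
      exact hlin.contDiffAt.comp z hfderiv
    have hgz : gradient u z ≠ 0 := by
      have := hgrad z (subset_closure hzΩ)
      intro h; rw [h, norm_zero] at this; linarith
    have hnorm : ContDiffAt ℝ 1 (fun y => ‖gradient u y‖) z := hgradC.norm ℝ hgz
    have hF : ContDiffAt ℝ 1 (fun y => y - (ε / ‖gradient u y‖) • gradient u y) z := by
      exact contDiffAt_id.sub ((contDiffAt_const.div hnorm
        (norm_ne_zero_iff.mpr hgz)).smul hgradC)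
    exact hF.contDiffWithinAt
end
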